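/- arXiv:1710.09410 — 2 statements merged into one kernel-verified Lean document; each statement's English description precedes it below -/
import Mathlib

section
/- If the real numbers α₁,…,α_N are impartitionable (i.e., for every sign vector ς ∈ {±1}^N, ∑ ς_i α_i ≠ 0), then the long-time average lim_{T→∞} (1/T) ∫₀^T ∏_{i=1}^N cos(α_i t) dt = 0. -/
open Finset

lemma avg_cos_tendsto {c : ℝ} (hc : c ≠ 0) :
    Filter.Tendsto (fun T : ℝ => (1 / T) * ∫ t in (0:ℝ)..T, Real.cos (c * t))
      Filter.atTop (nhds 0) := by
  have hint : ∀ T : ℝ, (∫ t in (0:ℝ)..T, Real.cos (c * t)) = c⁻¹ * Real.sin (c * T) := by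
    intro T
    rw [intervalIntegral.integral_comp_mul_left Real.cos hc]
    simp
  simp only [hint]
  apply squeeze_zero_norm' (a := fun T : ℝ => T⁻¹ * |c|⁻¹)
  · filter_upwards [Filter.eventually_ge_atTop (1:ℝ)] with T hT
    have hT0 : (0:ℝ) < T := lt_of_lt_of_le one_pos hT
    rw [norm_mul, norm_mul, one_div, Real.norm_eq_abs, Real.norm_eq_abs, Real.norm_eq_abs,
      abs_inv, abs_inv, abs_of_pos hT0]
    calc T⁻¹ * (|c|⁻¹ * |Real.sin (c * T)|) ≤ T⁻¹ * (|c|⁻¹ * 1) := by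
          gcongr
          exact Real.abs_sin_le_one _
      _ = T⁻¹ * |c|⁻¹ := by ring
  · simpa using (tendsto_inv_atTop_zero.mul_const (|c|⁻¹))

lemma prod_cos_eq (N : ℕ) (α : Fin N → ℝ) (t : ℝ) :
    ∏ i, Real.cos (α i * t) =
      (1 / 2 ^ N : ℝ) * ∑ S ∈ (univ : Finset (Fin N)).powerset,
        Real.cos ((∑ i ∈ S, α i - ∑ i ∈ univ \ S, α i) * t) := by
  have hC : ((∏ i, Real.cos (α i * t) : ℝ) : ℂ)
      = ((1 / 2 ^ N : ℝ) : ℂ) * ∑ S ∈ (univ : Finset (Fin N)).powerset,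
          Complex.exp ((((∑ i ∈ S, α i - ∑ i ∈ univ \ S, α i) * t : ℝ)) * Complex.I) := by
    calc ((∏ i, Real.cos (α i * t) : ℝ) : ℂ)
        = ∏ i, Complex.cos ((α i * t : ℝ) : ℂ) := by push_cast; rfl
      _ = ∏ i, (Complex.exp (((α i * t : ℝ) : ℂ) * Complex.I)
            + Complex.exp (-((α i * t : ℝ) : ℂ) * Complex.I)) / 2 := by
          simp only [Complex.cos]
      _ = (∏ i, (Complex.exp (((α i * t : ℝ) : ℂ) * Complex.I)
            + Complex.exp (-((α i * t : ℝ) : ℂ) * Complex.I))) / 2 ^ N := by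
          rw [Finset.prod_div_distrib, Finset.prod_const, card_univ, Fintype.card_fin]
      _ = (∑ S ∈ (univ : Finset (Fin N)).powerset,
            (∏ i ∈ S, Complex.exp (((α i * t : ℝ) : ℂ) * Complex.I))
              * ∏ i ∈ univ \ S, Complex.exp (-((α i * t : ℝ) : ℂ) * Complex.I)) / 2 ^ N := by
          rw [Finset.prod_add]
      _ = (∑ S ∈ (univ : Finset (Fin N)).powerset,
            Complex.exp ((((∑ i ∈ S, α i - ∑ i ∈ univ \ S, α i) * t : ℝ)) * Complex.I)) / 2 ^ N := by
          refine congrArg (· / (2:ℂ) ^ N) (Finset.sum_congr rfl fun S _ => ?_)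
          rw [← Complex.exp_sum, ← Complex.exp_sum, ← Complex.exp_add]
          congr 1
          push_cast
          simp only [sub_eq_add_neg, add_mul, neg_mul, Finset.sum_mul, Finset.sum_neg_distrib]
      _ = _ := by push_cast; ring
  have h2 := congrArg Complex.re hC
  simp only [Complex.ofReal_re, Complex.re_ofReal_mul, Complex.re_sum,
    Complex.exp_ofReal_mul_I_re] at h2
  exact h2

/-- A finite family of reals is impartitionable if every ±1-signed sum is nonzero. -/
def Impartitionable {N : ℕ} (α : Fin N → ℝ) : Prop :=
  ∀ ς : Fin N → Bool, (∑ i, (if ς i then (1 : ℝ) else -1) * α i) ≠ 0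

theorem stmt_1 (N : ℕ) (α : Fin N → ℝ) (h : Impartitionable α) :
    Filter.Tendsto
      (fun T : ℝ => (1 / T) * ∫ t in (0 : ℝ)..T, ∏ i, Real.cos (α i * t))
      Filter.atTop (nhds 0) := by
  have key : ∀ S : Finset (Fin N), (∑ i ∈ S, α i - ∑ i ∈ univ \ S, α i) ≠ 0 := by
    intro S
    have he : (∑ i, (if (decide (i ∈ S) : Bool) then (1:ℝ) else -1) * α i)
        = ∑ i ∈ S, α i - ∑ i ∈ univ \ S, α i := by
      rw [← Finset.sum_sdiff (Finset.subset_univ S)]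
      have h1 : ∑ i ∈ S, (if (decide (i ∈ S) : Bool) then (1:ℝ) else -1) * α i
          = ∑ i ∈ S, α i :=
        Finset.sum_congr rfl (fun i hi => by simp [hi])
      have h2 : ∑ i ∈ univ \ S, (if (decide (i ∈ S) : Bool) then (1:ℝ) else -1) * α i
          = -∑ i ∈ univ \ S, α i := by
        rw [← Finset.sum_neg_distrib]
        exact Finset.sum_congr rfl (fun i hi => by
          have : i ∉ S := (Finset.mem_sdiff.mp hi).2
          simp [this])
      rw [h1, h2]; ring
    rw [← he]; exact h _
  have hfun : (fun T : ℝ => (1 / T) * ∫ t in (0:ℝ)..T, ∏ i, Real.cos (α i * t))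
      = fun T : ℝ => ∑ S ∈ (univ : Finset (Fin N)).powerset,
          (1 / 2 ^ N : ℝ) * ((1 / T) * ∫ t in (0:ℝ)..T,
            Real.cos ((∑ i ∈ S, α i - ∑ i ∈ univ \ S, α i) * t)) := by
    funext T
    simp only [prod_cos_eq N α]
    rw [intervalIntegral.integral_const_mul, intervalIntegral.integral_finset_sum]
    · rw [Finset.mul_sum, Finset.mul_sum]
      exact Finset.sum_congr rfl fun S _ => by ring
    · intro S _
      exact (Real.continuous_cos.comp (continuous_const.mul continuous_id)).intervalIntegrable _ _
  rw [hfun]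
  have h0 : (0:ℝ) = ∑ S ∈ (univ : Finset (Fin N)).powerset, (0:ℝ) := by simp
  rw [h0]
  refine tendsto_finset_sum _ fun S _ => ?_
  simpa using Filter.Tendsto.const_mul ((1:ℝ)/2^N) (avg_cos_tendsto (key S))
end

section
/- Let ρ_+(t) = U_+ R D R† U_+† and ρ_−(t) = U_− R D R† U_−†, where D = diag(λ, 1−λ), R ∈ SU(2) has Euler angle β (middle angle), and U_± = diag(e^{∓igt/2}, e^{±igt/2}). Then the fidelity-type overlap B(ρ_+(t), ρ_−(t)) = tr√(√ρ_+ ρ_− √ρ_+) equals √(1 − (2λ−1)² sin²β sin²(gt)). -/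
open Matrix Complex
open scoped ComplexOrder

/-- The `SU(2)` matrix with Euler angles `(α, β, γ)`. -/
noncomputable def EulerR (α β γ : ℝ) : Matrix (Fin 2) (Fin 2) ℂ :=
  !![Complex.exp (Complex.I * (α + γ) / 2) * Real.cos (β / 2),
       Complex.exp (Complex.I * (α - γ) / 2) * Real.sin (β / 2);
     -Complex.exp (-Complex.I * (α - γ) / 2) * Real.sin (β / 2),
       Complex.exp (-Complex.I * (α + γ) / 2) * Real.cos (β / 2)]

/-- `D = diag(λ, 1 − λ)`. -/
noncomputable def Dmat (lam : ℝ) : Matrix (Fin 2) (Fin 2) ℂ :=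
  !![(lam : ℂ), 0; 0, ((1 - lam : ℝ) : ℂ)]

/-- `U₊ = diag(e^{−igt/2}, e^{igt/2})`. -/
noncomputable def Uplus (g t : ℝ) : Matrix (Fin 2) (Fin 2) ℂ :=
  !![Complex.exp (-Complex.I * g * t / 2), 0; 0, Complex.exp (Complex.I * g * t / 2)]

/-- `U₋ = diag(e^{igt/2}, e^{−igt/2})`. -/
noncomputable def Uminus (g t : ℝ) : Matrix (Fin 2) (Fin 2) ℂ :=
  !![Complex.exp (Complex.I * g * t / 2), 0; 0, Complex.exp (-Complex.I * g * t / 2)]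

/-- The positive semidefinite square root of a positive semidefinite matrix
(as defined in Mathlib of December 2024, since removed). -/
noncomputable def Matrix.PosSemidef.sqrt {n 𝕜 : Type*} [Fintype n] [DecidableEq n] [RCLike 𝕜]
    {A : Matrix n n 𝕜} (hA : A.PosSemidef) : Matrix n n 𝕜 :=
  (hA.1.eigenvectorUnitary : Matrix n n 𝕜) *
    diagonal (fun i => ((√(hA.1.eigenvalues i) : ℝ) : 𝕜)) *
    (star hA.1.eigenvectorUnitary : Matrix n n 𝕜)

lemma Matrix.PosSemidef.posSemidef_sqrt {n 𝕜 : Type*} [Fintype n] [DecidableEq n] [RCLike 𝕜]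
    {A : Matrix n n 𝕜} (hA : A.PosSemidef) : hA.sqrt.PosSemidef := by
  unfold Matrix.PosSemidef.sqrt
  have hD : (diagonal (fun i => ((√(hA.1.eigenvalues i) : ℝ) : 𝕜))).PosSemidef :=
    posSemidef_diagonal_iff.mpr (fun i => by
      exact_mod_cast Real.sqrt_nonneg _)
  simpa [star_eq_conjTranspose] using hD.mul_mul_conjTranspose_same
    (hA.1.eigenvectorUnitary : Matrix n n 𝕜)

lemma Matrix.PosSemidef.sqrt_mul_self {n 𝕜 : Type*} [Fintype n] [DecidableEq n] [RCLike 𝕜]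
    {A : Matrix n n 𝕜} (hA : A.PosSemidef) : hA.sqrt * hA.sqrt = A := by
  unfold Matrix.PosSemidef.sqrt
  have hU : (star hA.1.eigenvectorUnitary : Matrix n n 𝕜) * (hA.1.eigenvectorUnitary : Matrix n n 𝕜) = 1 :=
    Unitary.star_mul_self_of_mem hA.1.eigenvectorUnitary.2
  have hDD : diagonal (fun i => ((√(hA.1.eigenvalues i) : ℝ) : 𝕜)) *
      diagonal (fun i => ((√(hA.1.eigenvalues i) : ℝ) : 𝕜)) =
      diagonal (RCLike.ofReal ∘ hA.1.eigenvalues) := by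
    rw [diagonal_mul_diagonal]
    congr 1; funext i
    simp only [Function.comp_apply]
    rw [← RCLike.ofReal_mul, Real.mul_self_sqrt (hA.eigenvalues_nonneg i)]
  conv_rhs => rw [hA.1.spectral_theorem, Unitary.conjStarAlgAut_apply]
  calc _ = (hA.1.eigenvectorUnitary : Matrix n n 𝕜) *
        diagonal (fun i => ((√(hA.1.eigenvalues i) : ℝ) : 𝕜)) *
        ((star hA.1.eigenvectorUnitary : Matrix n n 𝕜) * (hA.1.eigenvectorUnitary : Matrix n n 𝕜)) *
        diagonal (fun i => ((√(hA.1.eigenvalues i) : ℝ) : 𝕜)) *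
        (star hA.1.eigenvectorUnitary : Matrix n n 𝕜) := by simp only [Matrix.mul_assoc]
    _ = _ := by rw [hU, Matrix.mul_one, Matrix.mul_assoc _ (diagonal _) (diagonal _), hDD]

/-- For any 2×2 matrix, `(tr A)² = tr(A²) + 2 det A`. -/
lemma aux_trace_sq (A : Matrix (Fin 2) (Fin 2) ℂ) :
    A.trace ^ 2 = (A * A).trace + 2 * A.det := by
  simp [Matrix.trace_fin_two, Matrix.det_fin_two, Matrix.mul_apply, Fin.sum_univ_two]
  ring

lemma aux_det_euler (α β γ : ℝ) : (EulerR α β γ).det = 1 := by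
  simp only [EulerR, Matrix.det_fin_two_of, neg_mul, neg_div, Complex.exp_neg, neg_neg,
    mul_neg, sub_neg_eq_add]
  have he1 := Complex.exp_ne_zero (Complex.I * (↑α + ↑γ) / 2)
  have he2 := Complex.exp_ne_zero (Complex.I * (↑α - ↑γ) / 2)
  field_simp
  have h : Complex.cos (↑β/2)^2 + Complex.sin (↑β/2)^2 = 1 := Complex.cos_sq_add_sin_sq _
  have h' : (↑(Real.cos (β/2)) : ℂ)^2 + (↑(Real.sin (β/2)) : ℂ)^2 = 1 := by
    exact_mod_cast Real.cos_sq_add_sin_sq _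
  linear_combination h'

lemma aux_det_uplus (g t : ℝ) : (Uplus g t).det = 1 := by
  simp only [Uplus, Matrix.det_fin_two_of, neg_mul, neg_div, Complex.exp_neg, mul_zero,
    zero_mul, sub_zero]
  field_simp

lemma aux_det_uminus (g t : ℝ) : (Uminus g t).det = 1 := by
  simp only [Uminus, Matrix.det_fin_two_of, neg_mul, neg_div, Complex.exp_neg, mul_zero,
    zero_mul, sub_zero]
  field_simp

lemma aux_det_dmat (lam : ℝ) : (Dmat lam).det = ((lam * (1 - lam) : ℝ) : ℂ) := by
  simp [Dmat, Matrix.det_fin_two_of]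

set_option maxHeartbeats 1000000 in
lemma aux_trace_prod (lam α β γ g t : ℝ) :
    ((Uplus g t * (EulerR α β γ * Dmat lam * (EulerR α β γ)ᴴ) * (Uplus g t)ᴴ) *
     (Uminus g t * (EulerR α β γ * Dmat lam * (EulerR α β γ)ᴴ) * (Uminus g t)ᴴ)).trace
    = ((lam * Real.cos (β/2)^2 + (1-lam) * Real.sin (β/2)^2 : ℝ) : ℂ)^2
      + ((lam * Real.sin (β/2)^2 + (1-lam) * Real.cos (β/2)^2 : ℝ) : ℂ)^2
      + (Complex.exp (Complex.I * (g*t) * 2) + Complex.exp (-(Complex.I * (g*t) * 2)))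
        * (((1 - 2*lam)^2 * Real.sin (β/2)^2 * Real.cos (β/2)^2 : ℝ) : ℂ)
    := by
  simp only [EulerR, Dmat, Uplus, Uminus, Matrix.trace_fin_two, Matrix.mul_apply,
    Fin.sum_univ_two, Matrix.conjTranspose_apply, star_def]
  simp only [Matrix.cons_val', Matrix.cons_val_zero, Matrix.cons_val_one, Matrix.head_cons,
    Matrix.head_fin_const, Matrix.empty_val', Matrix.cons_val_fin_one, Matrix.of_apply]
  simp only [← Complex.exp_conj, _root_.map_mul, map_div₀,
    _root_.map_add, _root_.map_sub, _root_.map_neg, Complex.conj_I, Complex.conj_ofReal,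
    map_ofNat, ← Complex.ofReal_cos, ← Complex.ofReal_sin, neg_div, Complex.exp_neg,
    neg_mul, neg_neg, mul_div_assoc, mul_zero, zero_mul, mul_one, one_mul, add_zero, zero_add]
  simp only [map_inv₀, ← Complex.exp_conj, _root_.map_mul, map_div₀,
    _root_.map_add, _root_.map_sub, _root_.map_neg, Complex.conj_I, Complex.conj_ofReal,
    map_ofNat, ← Complex.ofReal_cos, ← Complex.ofReal_sin, neg_div, Complex.exp_neg,
    neg_mul, neg_neg, mul_div_assoc, map_zero, mul_zero, zero_mul, mul_one, one_mul,
    add_zero, zero_add]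
  rw [show Complex.I * (↑g * ↑t) * 2 = (Complex.I * ↑g * (↑t/2)) + (Complex.I * ↑g * (↑t/2))
      + (Complex.I * ↑g * (↑t/2)) + (Complex.I * ↑g * (↑t/2)) from by ring,
    Complex.exp_add, Complex.exp_add, Complex.exp_add]
  have he1 := Complex.exp_ne_zero (Complex.I * ((↑α + ↑γ) / 2))
  have he2 := Complex.exp_ne_zero (Complex.I * ((↑α - ↑γ) / 2))
  have he3 := Complex.exp_ne_zero (Complex.I * ↑g * (↑t / 2))
  generalize cexp (Complex.I * ((↑α + ↑γ) / 2)) = e1 at *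
  generalize cexp (Complex.I * ((↑α - ↑γ) / 2)) = e2 at *
  generalize cexp (Complex.I * ↑g * (↑t / 2)) = e3 at *
  push_cast
  field_simp
  ring

theorem stmt_11 (lam α β γ g t : ℝ) (hlam : lam ∈ Set.Icc (0 : ℝ) 1)
    (ρp ρm : Matrix (Fin 2) (Fin 2) ℂ)
    (hρp : ρp = Uplus g t * (EulerR α β γ * Dmat lam * (EulerR α β γ)ᴴ) * (Uplus g t)ᴴ)
    (hρm : ρm = Uminus g t * (EulerR α β γ * Dmat lam * (EulerR α β γ)ᴴ) * (Uminus g t)ᴴ)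
    (h1 : ρp.PosSemidef) (h2 : (h1.sqrt * ρm * h1.sqrt).PosSemidef) :
    h2.sqrt.trace =
      (Real.sqrt (1 - (2 * lam - 1) ^ 2 * Real.sin β ^ 2 * Real.sin (g * t) ^ 2) : ℂ) := by
  obtain ⟨hl0, hl1⟩ := hlam
  have hSps : h2.sqrt.PosSemidef := h2.posSemidef_sqrt
  have hSS : h2.sqrt * h2.sqrt = h1.sqrt * ρm * h1.sqrt := h2.sqrt_mul_self
  -- determinants of ρp and ρm
  have hdρp : ρp.det = ((lam * (1 - lam) : ℝ) : ℂ) := by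
    rw [hρp]
    simp [Matrix.det_mul, Matrix.det_conjTranspose, aux_det_euler, aux_det_uplus,
      aux_det_dmat]
  have hdρm : ρm.det = ((lam * (1 - lam) : ℝ) : ℂ) := by
    rw [hρm]
    simp [Matrix.det_mul, Matrix.det_conjTranspose, aux_det_euler, aux_det_uminus,
      aux_det_dmat]
  -- det of the middle matrix
  have hdetM : (h1.sqrt * ρm * h1.sqrt).det = (((lam * (1 - lam))^2 : ℝ) : ℂ) := by
    have h' : h1.sqrt.det * h1.sqrt.det = ρp.det := by
      rw [← Matrix.det_mul, h1.sqrt_mul_self]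
    rw [Matrix.det_mul, Matrix.det_mul]
    push_cast
    rw [show h1.sqrt.det * ρm.det * h1.sqrt.det = h1.sqrt.det * h1.sqrt.det * ρm.det from by
      ring, h', hdρp, hdρm]
    push_cast
    ring
  -- trace of the middle matrix
  have htrM : (h1.sqrt * ρm * h1.sqrt).trace = (ρp * ρm).trace := by
    rw [Matrix.trace_mul_cycle, h1.sqrt_mul_self]
  -- nonnegativity of trace of sqrt
  have hdiag : ∀ i, 0 ≤ h2.sqrt i i := by
    intro i
    exact hSps.diag_nonneg
  have htr0 : 0 ≤ h2.sqrt.trace := by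
    rw [Matrix.trace_fin_two]
    exact add_nonneg (hdiag 0) (hdiag 1)
  -- nonnegativity of det of sqrt
  have hdet0 : 0 ≤ h2.sqrt.det := by
    rw [hSps.isHermitian.det_eq_prod_eigenvalues, Fin.prod_univ_two]
    have h0 := hSps.eigenvalues_nonneg 0
    have h1' := hSps.eigenvalues_nonneg 1
    simpa using Complex.zero_le_real.mpr (mul_nonneg h0 h1')
  -- real forms
  rw [Complex.le_def] at htr0 hdet0
  simp only [Complex.zero_re, Complex.zero_im] at htr0 hdet0
  set x := h2.sqrt.trace with hx
  set y := h2.sqrt.det with hy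
  have hxr : x = ((x.re : ℝ) : ℂ) := by
    rw [Complex.ext_iff]; simp [← htr0.2]
  have hyr : y = ((y.re : ℝ) : ℂ) := by
    rw [Complex.ext_iff]; simp [← hdet0.2]
  -- y.re = lam * (1 - lam)
  have hysq : y ^ 2 = (((lam * (1 - lam))^2 : ℝ) : ℂ) := by
    rw [hy, sq, ← Matrix.det_mul, hSS, hdetM]
  have hll : 0 ≤ lam * (1 - lam) := mul_nonneg hl0 (by linarith)
  have hyre : y.re = lam * (1 - lam) := by
    have h' : (y.re) ^ 2 = (lam * (1 - lam)) ^ 2 := by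
      have h'' := hysq
      rw [hyr] at h''
      exact_mod_cast h''
    rw [← Real.sqrt_sq hdet0.1, h', Real.sqrt_sq hll]
  -- the squared trace
  have hxsq : x ^ 2 = (ρp * ρm).trace + 2 * y := by
    rw [hx, hy, aux_trace_sq, hSS, htrM]
  have hcos : ((2 * Real.cos (2*(g*t)) : ℝ) : ℂ)
      = Complex.exp (Complex.I * (g*t) * 2) + Complex.exp (-(Complex.I * (g*t) * 2)) := by
    rw [show Complex.I * ((g:ℂ)*t) * 2 = ((2*(g*t) : ℝ) : ℂ) * Complex.I by push_cast; ring,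
      Complex.exp_mul_I, ← neg_mul, Complex.exp_mul_I]
    simp only [Complex.cos_neg, Complex.sin_neg]
    push_cast
    ring
  have htrval := aux_trace_prod lam α β γ g t
  rw [← hρp, ← hρm, ← hcos] at htrval
  -- real identity
  set s := Real.sin (β/2) with hs
  set c := Real.cos (β/2) with hc
  have hxsq' : (x.re) ^ 2 =
      ((lam * c^2 + (1-lam) * s^2)^2 + (lam * s^2 + (1-lam) * c^2)^2
        + 2 * Real.cos (2*(g*t)) * ((1 - 2*lam)^2 * s^2 * c^2)) + 2 * (lam * (1 - lam)) := by
    have h'' := hxsq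
    rw [htrval, hxr, hyr, hyre] at h''
    exact_mod_cast h''
  have htrig : ((lam * c^2 + (1-lam) * s^2)^2 + (lam * s^2 + (1-lam) * c^2)^2
        + 2 * Real.cos (2*(g*t)) * ((1 - 2*lam)^2 * s^2 * c^2)) + 2 * (lam * (1 - lam))
      = 1 - (2 * lam - 1) ^ 2 * Real.sin β ^ 2 * Real.sin (g * t) ^ 2 := by
    have hsc : s^2 + c^2 = 1 := Real.sin_sq_add_cos_sq (β/2)
    have hgt : Real.sin (g*t)^2 + Real.cos (g*t)^2 = 1 := Real.sin_sq_add_cos_sq (g*t)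
    have hβ : Real.sin β = 2 * s * c := by
      rw [hs, hc, ← Real.sin_two_mul]
      congr 1
      ring
    rw [hβ, Real.cos_two_mul]
    linear_combination ((s^2 + c^2 + 1) * (1 - 2*lam + 2*lam^2)) * hsc
      + (4 * (1 - 2*lam)^2 * s^2 * c^2) * hgt
  have hxval : x.re = Real.sqrt (1 - (2 * lam - 1) ^ 2 * Real.sin β ^ 2 * Real.sin (g * t) ^ 2) := by
    rw [← htrig, ← hxsq', Real.sqrt_sq htr0.1]
  rw [hxr, hxval]
end
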